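/- Let X be a Banach space with norm ‖·‖ and unit ball B_X, and let |||·||| be an equivalent norm on X with unit ball B. Suppose the restriction of |||·||| to the unit sphere S_X is weakly continuous at x ∈ S_X, and x is a point of continuity for B. Then x is a point of continuity for B_X. -/

import Mathlib

/-!
If `y ∈ B_X` tends weakly to `x`, then `‖y‖ → 1` because a norming functional of `x` is weakly
continuous. Hence `y / ‖y‖` is norm-close to `y`, tends weakly to `x` along the sphere, and the weak
continuity of `|||·|||` there gives `|||y||| → 1`. Then `y / max 1 |||y|||` lies in `B`, is
norm-close to `y` and tends weakly to `x`, so it tends to `x` in norm, and so does `y`.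
-/

open Filter Topology Metric

theorem Seminorm.mem_ball_finset_sup {𝕜 E ι : Type*} [SeminormedRing 𝕜] [AddCommGroup E]
    [Module 𝕜 E] {p : ι → Seminorm 𝕜 E} {s : Finset ι} {x y : E} {r : ℝ} (hr : 0 < r) :
    y ∈ (s.sup p).ball x r ↔ ∀ i ∈ s, p i (y - x) < r := by
  simp [Seminorm.ball_finset_sup_eq_iInter _ _ _ hr, Seminorm.mem_ball]

theorem tendsto_smul_sub_self {α X : Type*} [SeminormedAddCommGroup X] [NormedSpace ℝ X]
    {l : Filter α} {c : α → ℝ} {g : α → X} (hc : Tendsto c l (𝓝 1))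
    (hg : IsBoundedUnder (· ≤ ·) l (norm ∘ g)) :
    Tendsto (fun a => c a • g a - g a) l (𝓝 0) := by
  simpa only [sub_smul, one_smul] using
    (tendsto_sub_nhds_zero_iff.2 hc).zero_smul_isBoundedUnder_le hg

section WeakTopology

variable {X : Type*} [NormedAddCommGroup X] [NormedSpace ℝ X]

noncomputable def weakNhds (x : X) : Filter X :=
  comap (toWeakSpace ℝ X) (𝓝 (toWeakSpace ℝ X x))

def IsPointOfContinuity (K : Set X) (x : X) : Prop :=
  Tendsto id (weakNhds x ⊓ 𝓟 K) (𝓝 x)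

theorem hasBasis_weakNhds (x : X) :
    (weakNhds x).HasBasis (fun p : Finset (X →L[ℝ] ℝ) × ℝ => 0 < p.2)
      (fun p => {y | ∀ f ∈ p.1, |f y - f x| < p.2}) := by
  refine ((topDualPairing ℝ X).flip.weakBilin_withSeminorms.hasBasis_ball.comap
    (toWeakSpace ℝ X)).congr (fun _ => Iff.rfl) fun p hp => ?_
  ext y
  refine (Seminorm.mem_ball_finset_sup hp).trans (forall₂_congr fun f _ => ?_)
  change ‖f (y - x)‖ < p.2 ↔ _
  rw [map_sub, Real.norm_eq_abs]

theorem eventually_weakNhds_inf_principal_iff {x : X} {S : Set X} {P : X → Prop} :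
    (∀ᶠ y in weakNhds x ⊓ 𝓟 S, P y) ↔
      ∃ (s : Finset (X →L[ℝ] ℝ)) (δ : ℝ), 0 < δ ∧
        ∀ y ∈ S, (∀ f ∈ s, |f y - f x| < δ) → P y := by
  simp only [((hasBasis_weakNhds x).inf_principal S).eventually_iff, Prod.exists,
    Set.mem_inter_iff, Set.mem_ofPred_eq, and_imp]
  exact exists₂_congr fun s δ => and_congr_right fun _ => forall_congr' fun _ => Imp.swap

theorem tendsto_weakNhds_apply (f : X →L[ℝ] ℝ) (x : X) :
    Tendsto f (weakNhds x) (𝓝 (f x)) :=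
  Metric.tendsto_nhds.2 fun ε hε =>
    Eventually.mono ((hasBasis_weakNhds x).mem_of_mem (i := ({f}, ε)) hε) fun _ hy =>
      hy f (Finset.mem_singleton_self f)

theorem Filter.Tendsto.weakNhds_of_tendsto_sub {α : Type*} {l : Filter α} {u v : α → X} {x : X}
    (hv : Tendsto v l (weakNhds x)) (huv : Tendsto (fun a => u a - v a) l (𝓝 0)) :
    Tendsto u l (weakNhds x) := by
  rw [weakNhds, tendsto_comap_iff] at hv ⊢
  have h := ((toWeakSpaceCLM ℝ X).continuous.tendsto' 0 0 (map_zero _)).comp huv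
  simpa [Function.comp_def] using h.add hv

theorem tendsto_norm_weakNhds_inf_norm_le (x : X) :
    Tendsto norm (weakNhds x ⊓ 𝓟 {y | ‖y‖ ≤ ‖x‖}) (𝓝 ‖x‖) := by
  obtain ⟨g, hg, hgx⟩ := exists_dual_vector'' ℝ x
  refine tendsto_of_tendsto_of_tendsto_of_le_of_le' (g := g) ?_ tendsto_const_nhds
    (Eventually.of_forall fun y => ?_) (mem_inf_of_right (mem_principal_self _))
  · simpa [hgx] using (tendsto_weakNhds_apply g x).mono_left inf_le_left
  · exact (le_abs_self _).trans ((g.le_opNorm y).trans (mul_le_of_le_one_left (norm_nonneg y) hg))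

theorem isPointOfContinuity_unitBall_of_tendsto_sphere {N : X → ℝ}
    (hN : ∀ t : ℝ, 0 < t → ∀ u : X, N (t • u) = t * N u) {x : X} (hx : ‖x‖ = 1)
    (hNsphere : Tendsto N (weakNhds x ⊓ 𝓟 {y | ‖y‖ = 1}) (𝓝 1))
    (hB : IsPointOfContinuity {y | N y ≤ 1} x) :
    IsPointOfContinuity {y | ‖y‖ ≤ 1} x := by
  set l := weakNhds x ⊓ 𝓟 {y : X | ‖y‖ ≤ 1}
  have hweak : Tendsto id l (weakNhds x) := tendsto_id.mono_left inf_le_left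
  have hball : ∀ᶠ y in l, ‖y‖ ≤ 1 := mem_inf_of_right (mem_principal_self _)
  have hbdd : IsBoundedUnder (· ≤ ·) l (norm ∘ id) := isBoundedUnder_of_eventually_le hball
  have hnorm : Tendsto norm l (𝓝 1) := by
    simpa only [hx] using tendsto_norm_weakNhds_inf_norm_le x
  have hpos : ∀ᶠ y in l, 0 < ‖y‖ := hnorm.eventually (lt_mem_nhds one_pos)
  have hsphere : Tendsto (fun y => ‖y‖⁻¹ • y) l (weakNhds x ⊓ 𝓟 {y | ‖y‖ = 1}) := by
    refine tendsto_inf.2 ⟨hweak.weakNhds_of_tendsto_sub ?_, tendsto_principal.2 ?_⟩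
    · simpa using tendsto_smul_sub_self (by simpa using hnorm.inv₀ one_ne_zero) hbdd
    · exact hpos.mono fun y hy => norm_smul_inv_norm (norm_pos_iff.1 hy)
  have hNy : Tendsto N l (𝓝 1) := by
    have h := hnorm.mul (hNsphere.comp hsphere)
    rw [one_mul] at h
    refine h.congr' (hpos.mono fun y hy => ?_)
    simp only [Function.comp_apply, ← hN _ hy, smul_inv_smul₀ hy.ne']
  set m := fun y => max 1 (N y)
  have hm : Tendsto m l (𝓝 1) := by
    simpa using (tendsto_const_nhds (x := (1 : ℝ))).max hNy
  have hshrink : Tendsto (fun y => (m y)⁻¹ • y - y) l (𝓝 0) :=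
    tendsto_smul_sub_self (by simpa using hm.inv₀ one_ne_zero) hbdd
  have hz : Tendsto (fun y => (m y)⁻¹ • y) l (weakNhds x ⊓ 𝓟 {y | N y ≤ 1}) := by
    refine tendsto_inf.2 ⟨hweak.weakNhds_of_tendsto_sub hshrink, tendsto_principal.2 ?_⟩
    refine Eventually.of_forall fun y => ?_
    have hm_pos : 0 < m y := lt_of_lt_of_le one_pos (le_max_left _ _)
    rw [Set.mem_ofPred_eq, hN _ (inv_pos.2 hm_pos), inv_mul_le_one₀ hm_pos]
    exact le_max_right _ _
  have h := (hB.comp hz).sub hshrink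
  rw [sub_zero] at h
  exact h.congr fun y => sub_sub_cancel _ y

end WeakTopology

theorem stmt19 {X : Type*} [NormedAddCommGroup X] [NormedSpace ℝ X]
    (N : X → ℝ)
    (hhom : ∀ (t : ℝ) (u : X), N (t • u) = |t| * N u)
    (x : X) (hx : ‖x‖ = 1) (hNx : N x = 1)
    (hweakcont : ∀ ε > (0 : ℝ), ∃ (s : Finset (X →L[ℝ] ℝ)) (δ : ℝ), 0 < δ ∧
      ∀ y : X, ‖y‖ = 1 → (∀ f ∈ s, |f y - f x| < δ) → |N y - N x| < ε)
    (hpcB : ∀ ε > (0 : ℝ), ∃ (s : Finset (X →L[ℝ] ℝ)) (δ : ℝ), 0 < δ ∧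
      ∀ y : X, N y ≤ 1 → (∀ f ∈ s, |f y - f x| < δ) → ‖y - x‖ ≤ ε) :
    ∀ ε > (0 : ℝ), ∃ (s : Finset (X →L[ℝ] ℝ)) (δ : ℝ), 0 < δ ∧
      ∀ y : X, ‖y‖ ≤ 1 → (∀ f ∈ s, |f y - f x| < δ) → ‖y - x‖ ≤ ε := by
  have hN : Tendsto N (weakNhds x ⊓ 𝓟 {y | ‖y‖ = 1}) (𝓝 1) :=
    Metric.tendsto_nhds.2 fun ε hε => eventually_weakNhds_inf_principal_iff.2 <| by
      simpa only [Set.mem_ofPred_eq, Real.dist_eq, hNx] using hweakcont ε hε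
  have hB : IsPointOfContinuity {y | N y ≤ 1} x :=
    nhds_basis_closedBall.tendsto_right_iff.2 fun ε hε =>
      eventually_weakNhds_inf_principal_iff.2 <| by
        simpa only [Set.mem_ofPred_eq, id, mem_closedBall, dist_eq_norm] using hpcB ε hε
  have hBX : IsPointOfContinuity {y | ‖y‖ ≤ 1} x :=
    isPointOfContinuity_unitBall_of_tendsto_sphere
      (fun t ht u => by rw [hhom, abs_of_pos ht]) hx hN hB
  intro ε hε
  simpa only [Set.mem_ofPred_eq, id, mem_closedBall, dist_eq_norm] using
    eventually_weakNhds_inf_principal_iff.1 (nhds_basis_closedBall.tendsto_right_iff.1 hBX ε hε)
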